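/- For every natural number n ≥ 3, the game chromatic number of the 4×n cylinder graph satisfies χ_g(P_4 □ C_n) ≤ 5; that is, Alice has a winning strategy in the 5-coloring game on P_4 □ C_n. -/

import Mathlib

open SimpleGraph

/-- A move coloring vertex `v` with color `col` is valid for the partial coloring `c`
if `v` is uncolored and no neighbor of `v` already has color `col`. -/
def validMove {V : Type*} (G : SimpleGraph V) {k : ℕ} (c : V → Option (Fin k))
    (v : V) (col : Fin k) : Prop :=
  c v = none ∧ ∀ u, G.Adj u v → c u ≠ some col

/-- All vertices are colored. -/
def allColored {V : Type*} {k : ℕ} (c : V → Option (Fin k)) : Prop :=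
  ∀ v, c v ≠ none

/-- `AliceWins G k turn c` : starting from the partial proper coloring `c` of `G`,
with `turn = true` meaning that it is Alice's move (`turn = false` : Bob's move),
Alice can force the `k`-coloring game to end with every vertex colored. -/
inductive AliceWins {V : Type*} [DecidableEq V] (G : SimpleGraph V) (k : ℕ) :
    Bool → (V → Option (Fin k)) → Prop
  | finished (turn : Bool) (c : V → Option (Fin k)) (h : allColored c) :
      AliceWins G k turn c
  | aliceMove (c : V → Option (Fin k)) (v : V) (col : Fin k)
      (hm : validMove G c v col)
      (h : AliceWins G k false (Function.update c v (some col))) :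
      AliceWins G k true c
  | bobTurn (c : V → Option (Fin k))
      (hne : ∃ v col, validMove G c v col)
      (h : ∀ v col, validMove G c v col →
        AliceWins G k true (Function.update c v (some col))) :
      AliceWins G k false c

/-- `BobWins G k turn c` : starting from the partial proper coloring `c` of `G`,
with `turn = true` meaning that it is Alice's move (`turn = false` : Bob's move),
Bob can force the `k`-coloring game to end with some vertex left uncolored. -/
inductive BobWins {V : Type*} [DecidableEq V] (G : SimpleGraph V) (k : ℕ) :
    Bool → (V → Option (Fin k)) → Prop
  | aliceTurn (c : V → Option (Fin k)) (h0 : ¬ allColored c)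
      (h : ∀ v col, validMove G c v col →
        BobWins G k false (Function.update c v (some col))) :
      BobWins G k true c
  | bobMove (c : V → Option (Fin k)) (v : V) (col : Fin k)
      (hm : validMove G c v col)
      (h : BobWins G k true (Function.update c v (some col))) :
      BobWins G k false c
  | bobStuck (c : V → Option (Fin k)) (h0 : ¬ allColored c)
      (h : ∀ v col, ¬ validMove G c v col) :
      BobWins G k false c

/-- The game chromatic number: the least `k` such that Alice has a winning strategy
in the `k`-coloring game on `G` (Alice moves first), starting from the empty coloring. -/
noncomputable def gameChromaticNumber {V : Type*} [DecidableEq V] (G : SimpleGraph V) : ℕ :=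
  sInf {k | AliceWins G k true (fun _ => none)}

/-- The Bob-start game chromatic number: the least `k` such that Alice has a winning
strategy in the `k`-coloring game on `G` in which Bob moves first. -/
noncomputable def bobStartGameChromaticNumber {V : Type*} [DecidableEq V]
    (G : SimpleGraph V) : ℕ :=
  sInf {k | AliceWins G k false (fun _ => none)}

/-! Every vertex of `P₄ □ Cₙ` has at most four neighbours, so with five colours an uncoloured
vertex always has a free colour. Hence no position is ever blocked, and every play of the game,
whatever either player does, colours the whole graph. -/

namespace SimpleGraph

instance (n : ℕ) : DecidableRel (pathGraph n).Adj :=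
  fun _ _ => decidable_of_iff' _ pathGraph_adj

theorem cycleGraph_degree_le_two {n : ℕ} (v : Fin n) : (cycleGraph n).degree v ≤ 2 := by
  match n with
  | 0 => exact v.elim0
  | 1 => simp [cycleGraph_one_eq_bot]
  | _ + 2 => exact cycleGraph_degree_two_le ▸ Finset.card_le_two

theorem pathGraph_degree_le_two {n : ℕ} (v : Fin n) : (pathGraph n).degree v ≤ 2 :=
  (degree_le_of_le pathGraph_le_cycleGraph).trans (cycleGraph_degree_le_two v)

end SimpleGraph

section GreedyPlay

variable {V : Type*} [Fintype V] {k : ℕ}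

def uncolored (c : V → Option (Fin k)) : Finset V := {v | c v = none}

lemma card_uncolored_update_lt [DecidableEq V] {c : V → Option (Fin k)} {v : V}
    (hv : c v = none) (col : Fin k) :
    (uncolored (Function.update c v (some col))).card < (uncolored c).card := by
  have herase : uncolored (Function.update c v (some col)) = (uncolored c).erase v := by
    ext u
    by_cases hu : u = v <;> simp [uncolored, hu]
  exact herase ▸ Finset.card_erase_lt_of_mem (by simpa [uncolored] using hv)

variable {G : SimpleGraph V} [DecidableRel G.Adj]

lemma exists_validMove_of_degree_lt {c : V → Option (Fin k)} {v : V} (hv : c v = none)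
    (hdeg : G.degree v < k) : ∃ col, validMove G c v col := by
  have hcard : ((G.neighborFinset v).image c).card <
      (Finset.univ.map .some : Finset (Option (Fin k))).card :=
    calc _ ≤ G.degree v := Finset.card_image_le
      _ < k := hdeg
      _ = _ := by simp
  obtain ⟨_, hmem, hfree⟩ := Finset.exists_mem_notMem_of_card_lt_card hcard
  obtain ⟨col, -, rfl⟩ := Finset.mem_map.mp hmem
  refine ⟨col, hv, fun u hu hcu => hfree (Finset.mem_image.mpr ⟨u, ?_, hcu⟩)⟩
  exact (G.mem_neighborFinset v u).mpr hu.symm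

theorem aliceWins_of_forall_degree_lt [DecidableEq V] (hdeg : ∀ v, G.degree v < k)
    (turn : Bool) (c : V → Option (Fin k)) : AliceWins G k turn c := by
  induction hN : (uncolored c).card using Nat.strong_induction_on generalizing turn c with
  | _ N ih =>
  by_cases hall : allColored c
  · exact .finished turn c hall
  obtain ⟨v, hv⟩ : ∃ v, c v = none := by simpa [allColored] using hall
  have hnext : ∀ turn w col, validMove G c w col →
      AliceWins G k turn (Function.update c w (some col)) :=
    fun turn w col hm => ih _ (hN ▸ card_uncolored_update_lt hm.1 col) turn _ rfl
  obtain ⟨col, hm⟩ := exists_validMove_of_degree_lt hv (hdeg v)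
  cases turn with
  | true => exact .aliceMove c v col hm (hnext false v col hm)
  | false => exact .bobTurn c ⟨v, col, hm⟩ (hnext true)

end GreedyPlay

theorem gameChromaticNumber_cylinder_le_five_general (n : ℕ) :
    gameChromaticNumber (pathGraph 4 □ cycleGraph n) ≤ 5 ∧
      AliceWins (pathGraph 4 □ cycleGraph n) 5 true (fun _ => none) := by
  classical
  have hwin : AliceWins (pathGraph 4 □ cycleGraph n) 5 true (fun _ => none) := by
    refine aliceWins_of_forall_degree_lt (fun v => ?_) true _
    have := pathGraph_degree_le_two v.1
    have := cycleGraph_degree_le_two v.2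
    rw [degree_boxProd]
    omega
  exact ⟨Nat.sInf_le hwin, hwin⟩

/-- For every `n ≥ 3`, the game chromatic number of the `4 × n` cylinder graph
`P₄ □ Cₙ` is at most `5`; that is, Alice has a winning strategy in the
`5`-coloring game on `P₄ □ Cₙ`. -/
theorem gameChromaticNumber_cylinder_le_five (n : ℕ) (hn : 3 ≤ n) :
    gameChromaticNumber (pathGraph 4 □ cycleGraph n) ≤ 5 ∧
      AliceWins (pathGraph 4 □ cycleGraph n) 5 true (fun _ => none) :=
  gameChromaticNumber_cylinder_le_five_general n
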